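/- Let γ: [0,B] → ℝ² be a regular C² parametrization of a plane curve Γ, let j: Γ → ℝ be a continuous function, let T be an affine transformation of ℝ² with invertible linear part L, and let j̃ on T(Γ) be defined by j̃(Tx) = j(x). Then the affine-weighted curvature integral satisfies ∫_{T(Γ)} |j̃|^{2/3} |κ̃|^{1/3} ds = |det L|^{1/3} ∫_{Γ} |j|^{2/3} |κ|^{1/3} ds, i.e. ∫_0^B |j(γ(t))|^{2/3} |κ̃(T(γ(t)))|^{1/3} ‖Lγ'(t)‖ dt = |det L|^{1/3} ∫_0^B |j(γ(t))|^{2/3} |κ(γ(t))|^{1/3} ‖γ'(t)‖ dt. Consequently, for a cartoon function f with f = f̃ ∘ T one has E_2(f̃) = |det L|^{1/2} E_2(f). -/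
import Mathlib


open MeasureTheory Real Filter Set Topology
open scoped ENNReal

noncomputable section

/-- The determinant `det(a, b)` of two vectors of `ℝ²`. -/
def det2 (a b : ℝ × ℝ) : ℝ := a.1 * b.2 - a.2 * b.1


/-- `det2` transforms by the determinant under a linear map. -/
lemma det2_map (L : (ℝ × ℝ) ≃ₗ[ℝ] ℝ × ℝ) (a b : ℝ × ℝ) :
    det2 (L a) (L b) = LinearMap.det (L : (ℝ × ℝ) →ₗ[ℝ] ℝ × ℝ) * det2 a b := by
  have hdet : LinearMap.det (L : (ℝ × ℝ) →ₗ[ℝ] ℝ × ℝ) =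
      det2 (L (1, 0)) (L (0, 1)) := by
    rw [← LinearMap.det_toMatrix (Module.Basis.finTwoProd ℝ), Matrix.det_fin_two]
    simp [LinearMap.toMatrix_apply, Module.Basis.finTwoProd, det2]
    ring
  have ha : (a : ℝ × ℝ) = a.1 • ((1:ℝ), (0:ℝ)) + a.2 • ((0:ℝ), (1:ℝ)) := by
    ext <;> simp
  have hb : (b : ℝ × ℝ) = b.1 • ((1:ℝ), (0:ℝ)) + b.2 • ((0:ℝ), (1:ℝ)) := by
    ext <;> simp
  rw [hdet]
  nth_rewrite 1 [ha]; nth_rewrite 1 [hb]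
  simp only [map_add, LinearEquiv.map_smul, det2]
  simp only [Prod.fst_add, Prod.snd_add, Prod.smul_fst, Prod.smul_snd, smul_eq_mul]
  ring

lemma abs_rpow_third_norm (v : ℝ × ℝ) (hv : v ≠ 0) (x : ℝ) :
    |x / ‖v‖ ^ 3| ^ ((1:ℝ)/3) * ‖v‖ = |x| ^ ((1:ℝ)/3) := by
  have hvn : (0:ℝ) < ‖v‖ := norm_pos_iff.mpr hv
  have h3 : |(‖v‖:ℝ) ^ 3| = ‖v‖ ^ 3 := abs_of_nonneg (by positivity)
  rw [abs_div, h3, Real.div_rpow (abs_nonneg x) (by positivity)]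
  have : ((‖v‖:ℝ) ^ 3) ^ ((1:ℝ)/3) = ‖v‖ := by
    rw [← Real.rpow_natCast ‖v‖ 3, ← Real.rpow_mul hvn.le]
    norm_num
  rw [this, div_mul_cancel₀ _ hvn.ne']

/-- Let `γ : [0,B] → ℝ²` be a regular `C²` parametrization of
a plane curve `Γ` with curvature `κ(γ(t)) = det(γ', γ'')/‖γ'‖³`, `j : Γ → ℝ`
continuous, `T` an affine transformation with invertible linear part `L`, `j̃`
defined on `T(Γ)` by `j̃(Tx) = j(x)`, and `κ̃` the curvature of `T ∘ γ`, i.e.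
`κ̃(T(γ(t))) = det L ⬝ det(γ', γ'')/‖Lγ'‖³`. Then
`∫_{T(Γ)} |j̃|^{2/3} |κ̃|^{1/3} ds = |det L|^{1/3} ∫_Γ |j|^{2/3} |κ|^{1/3} ds`,
both arclength integrals being computed through `γ`; consequently (for a
cartoon function with edge curve `Γ` and jump `j`)
`E_2(f̃) = |det L|^{1/2} E_2(f)`. -/
theorem curvature_integral_affine_invariance
    (B : ℝ) (hB : 0 < B) (γ : ℝ → ℝ × ℝ) (hγ : ContDiff ℝ 2 γ)
    (hreg : ∀ t ∈ Icc (0:ℝ) B, deriv γ t ≠ 0)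
    (j : ℝ × ℝ → ℝ) (hj : Continuous j)
    (L : (ℝ × ℝ) ≃ₗ[ℝ] ℝ × ℝ)
    (κ κT : ℝ → ℝ)
    (hκ : ∀ t, κ t = det2 (deriv γ t) (deriv (deriv γ) t) / ‖deriv γ t‖ ^ 3)
    (hκT : ∀ t, κT t =
      det2 (L (deriv γ t)) (L (deriv (deriv γ) t)) / ‖L (deriv γ t)‖ ^ 3) :
    (∫ t in Icc (0:ℝ) B,
        |j (γ t)| ^ ((2:ℝ)/3) * |κT t| ^ ((1:ℝ)/3) * ‖L (deriv γ t)‖) =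
      |LinearMap.det (L : (ℝ × ℝ) →ₗ[ℝ] ℝ × ℝ)| ^ ((1:ℝ)/3) *
        ∫ t in Icc (0:ℝ) B,
          |j (γ t)| ^ ((2:ℝ)/3) * |κ t| ^ ((1:ℝ)/3) * ‖deriv γ t‖ ∧
    (∫ t in Icc (0:ℝ) B,
        |j (γ t)| ^ ((2:ℝ)/3) * |κT t| ^ ((1:ℝ)/3) * ‖L (deriv γ t)‖) ^ ((3:ℝ)/2) =
      |LinearMap.det (L : (ℝ × ℝ) →ₗ[ℝ] ℝ × ℝ)| ^ ((1:ℝ)/2) *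
        (∫ t in Icc (0:ℝ) B,
          |j (γ t)| ^ ((2:ℝ)/3) * |κ t| ^ ((1:ℝ)/3) * ‖deriv γ t‖) ^ ((3:ℝ)/2) := by
  set D := LinearMap.det (L : (ℝ × ℝ) →ₗ[ℝ] ℝ × ℝ) with hD
  have hEq : ∀ t ∈ Icc (0:ℝ) B,
      |j (γ t)| ^ ((2:ℝ)/3) * |κT t| ^ ((1:ℝ)/3) * ‖L (deriv γ t)‖ =
      |D| ^ ((1:ℝ)/3) *
        (|j (γ t)| ^ ((2:ℝ)/3) * |κ t| ^ ((1:ℝ)/3) * ‖deriv γ t‖) := by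
    intro t ht
    have hv : deriv γ t ≠ 0 := hreg t ht
    have hLv : L (deriv γ t) ≠ 0 := by
      simpa using (L.map_ne_zero_iff).mpr hv
    have h1 : |κT t| ^ ((1:ℝ)/3) * ‖L (deriv γ t)‖ =
        |D * det2 (deriv γ t) (deriv (deriv γ) t)| ^ ((1:ℝ)/3) := by
      rw [hκT t, det2_map, abs_rpow_third_norm _ hLv]
    have h2 : |κ t| ^ ((1:ℝ)/3) * ‖deriv γ t‖ =
        |det2 (deriv γ t) (deriv (deriv γ) t)| ^ ((1:ℝ)/3) := by
      rw [hκ t, abs_rpow_third_norm _ hv]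
    rw [mul_assoc, h1, mul_assoc, h2, abs_mul,
      Real.mul_rpow (abs_nonneg _) (abs_nonneg _)]
    ring
  have hInt : (∫ t in Icc (0:ℝ) B,
        |j (γ t)| ^ ((2:ℝ)/3) * |κT t| ^ ((1:ℝ)/3) * ‖L (deriv γ t)‖) =
      |D| ^ ((1:ℝ)/3) *
        ∫ t in Icc (0:ℝ) B,
          |j (γ t)| ^ ((2:ℝ)/3) * |κ t| ^ ((1:ℝ)/3) * ‖deriv γ t‖ := by
    rw [← MeasureTheory.integral_const_mul]
    exact setIntegral_congr_fun measurableSet_Icc hEq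
  refine ⟨hInt, ?_⟩
  have hI : (0:ℝ) ≤ ∫ t in Icc (0:ℝ) B,
      |j (γ t)| ^ ((2:ℝ)/3) * |κ t| ^ ((1:ℝ)/3) * ‖deriv γ t‖ :=
    setIntegral_nonneg measurableSet_Icc (fun t _ => by positivity)
  rw [hInt, Real.mul_rpow (by positivity) hI, ← Real.rpow_mul (abs_nonneg _)]
  norm_num


end
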